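/- Fix R > 0. The function H(u) := ∫_0^R χ♯(r,u) dr is differentiable at every u ∈ ℝ with u ≠ 0 and |u| ≠ R, and H′(u) = ∫_{|u|}^{max(R,|u|)} u·e^{r/2}·f′(u² − r²) dr − (1/2)·sgn(u)·e^{|u|/2}·1_{|u|< R}. Consequently the isothermal entropy flux remainder h♯(R,u) := (1/2)·sgn(u) + H′(u) equals (1/2)·sgn(u)·(1 − e^{|u|/2}·1_{|u|<R}) + ∫_{|u|}^{max(R,|u|)} u·e^{r/2}·f′(u² − r²) dr. -/

import Mathlib

open MeasureTheory Filter Topology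

/-- The power series `f(y) = ∑ (−1)^n yⁿ / (16ⁿ (n!)²)`. -/
noncomputable def f (y : ℝ) : ℝ :=
  ∑' n : ℕ, (-1 : ℝ) ^ n * y ^ n / (16 ^ n * (Nat.factorial n : ℝ) ^ 2)

/-- The isothermal entropy kernel
`χ♯(R,u) = (1/2)·sgn(R)·e^{R/2}·f(u² − R²)` for `|u| < |R|`, and `0` otherwise. -/
noncomputable def chiSharp (R u : ℝ) : ℝ :=
  if |u| < |R| then (1 / 2) * Real.sign R * Real.exp (R / 2) * f (u ^ 2 - R ^ 2) else 0

noncomputable def fc : ℕ → ℝ := fun n => (-1 : ℝ) ^ n / (16 ^ n * (Nat.factorial n : ℝ) ^ 2)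

lemma fc_norm (n : ℕ) : ‖fc n‖ = 1 / (16 ^ n * (Nat.factorial n : ℝ) ^ 2) := by
  have h : (0:ℝ) < 16 ^ n * (Nat.factorial n : ℝ) ^ 2 := by positivity
  rw [fc, norm_div, norm_pow, norm_neg, norm_one, one_pow, Real.norm_eq_abs, abs_of_pos h]

lemma fc_mul_le (n : ℕ) (r : ℝ) (hr : 0 ≤ r) : ‖fc n‖ * r ^ n ≤ r ^ n / (Nat.factorial n) := by
  rw [fc_norm]
  have h1 : (Nat.factorial n : ℝ) ≤ 16 ^ n * (Nat.factorial n : ℝ) ^ 2 := by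
    have h2 : (1:ℝ) ≤ 16 ^ n := one_le_pow₀ (by norm_num)
    have hf1 : (1:ℝ) ≤ (Nat.factorial n : ℝ) := by exact_mod_cast Nat.factorial_pos n
    have h3 : (Nat.factorial n : ℝ) ≤ (Nat.factorial n : ℝ) ^ 2 := by nlinarith
    nlinarith
  rw [one_div, inv_mul_eq_div, div_le_div_iff₀ (by positivity) (by positivity)]
  have hf1 : (1:ℝ) ≤ (Nat.factorial n : ℝ) := by exact_mod_cast Nat.factorial_pos n
  nlinarith [pow_nonneg hr n]

lemma fc_summable (r : ℝ) (hr : 0 ≤ r) : Summable fun n => ‖fc n‖ * r ^ n :=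
  Summable.of_nonneg_of_le (fun n => by positivity) (fun n => fc_mul_le n r hr)
    (Real.summable_pow_div_factorial r)

noncomputable def fp : FormalMultilinearSeries ℝ ℝ ℝ := FormalMultilinearSeries.ofScalars ℝ fc

lemma fp_radius : fp.radius = ⊤ := by
  apply FormalMultilinearSeries.radius_eq_top_of_summable_norm
  intro r
  have := fc_summable r r.2
  simp only [fp, FormalMultilinearSeries.ofScalars_norm]
  exact this

lemma f_hasSum (y : ℝ) : HasSum (fun n => fc n * y ^ n) (f y) := by
  have hs : Summable fun n => fc n * y ^ n := by
    apply Summable.of_norm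
    have := fc_summable |y| (abs_nonneg y)
    simpa [norm_mul, abs_pow] using this
  have : f y = ∑' n, fc n * y ^ n := by
    apply tsum_congr
    intro n
    rw [fc, div_mul_eq_mul_div]
  rw [this]
  exact hs.hasSum

lemma f_fpow : HasFPowerSeriesOnBall f fp 0 ⊤ := by
  refine ⟨fp_radius ▸ le_rfl, by simp, fun {y} _ => ?_⟩
  have := f_hasSum y
  have he : (fun n => fp n fun _ => y) = fun n => fc n * y ^ n := by
    funext n
    rw [fp, FormalMultilinearSeries.ofScalars_apply_eq, smul_eq_mul]
  rw [he, zero_add]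
  exact this

lemma f_analytic (y : ℝ) : AnalyticAt ℝ f y := by
  have := f_fpow.analyticAt_of_mem (y := y) (by simp)
  simpa using this

lemma f_contDiff : ContDiff ℝ (⊤ : ℕ∞) f :=
  contDiff_iff_contDiffAt.mpr fun y => (f_analytic y).contDiffAt

lemma f_diff : Differentiable ℝ f := fun y => (f_analytic y).differentiableAt

lemma derivf_cont : Continuous (deriv f) := f_contDiff.continuous_deriv (by simp)

lemma f_zero : f 0 = 1 := by
  rw [f, tsum_eq_single 0]
  · norm_num
  · intro n hn
    simp [zero_pow hn]

lemma f_cont : Continuous f := f_diff.continuous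


-- continuity helpers
lemma cont_g (b : ℝ) : Continuous fun r => (1/2) * Real.exp (r/2) * f (b - r^2) :=
  ((continuous_const.mul (Real.continuous_exp.comp (continuous_id.div_const 2))).mul
    (f_cont.comp (continuous_const.sub (continuous_pow 2))))

lemma cont_gx (x : ℝ) : Continuous fun r => (1/2) * Real.exp (r/2) * f (x^2 - r^2) := cont_g (x^2)

lemma cont_phi : Continuous fun p : ℝ × ℝ => p.1 * Real.exp (p.2/2) * deriv f (p.1^2 - p.2^2) :=
  (continuous_fst.mul (Real.continuous_exp.comp (continuous_snd.div_const 2))).mul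
    (derivf_cont.comp (((continuous_fst.pow 2)).sub (continuous_snd.pow 2)))

lemma cont_psi : Continuous fun p : ℝ × ℝ => (1/2) * Real.exp (p.1/2) * f (p.2^2 - p.1^2) :=
  (continuous_const.mul (Real.continuous_exp.comp (continuous_fst.div_const 2))).mul
    (f_cont.comp ((continuous_snd.pow 2).sub (continuous_fst.pow 2)))

lemma hasDerivAt_inner (t x : ℝ) :
    HasDerivAt (fun x => (1/2) * Real.exp (t/2) * f (x^2 - t^2))
      (x * Real.exp (t/2) * deriv f (x^2 - t^2)) x := by
  have h1 : HasDerivAt (fun x : ℝ => x^2 - t^2) (2*x) x := by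
    simpa using (hasDerivAt_pow 2 x).sub_const (t^2)
  have h2 : HasDerivAt f (deriv f (x^2 - t^2)) (x^2 - t^2) :=
    (f_diff (x^2 - t^2)).hasDerivAt
  have h3 := (h2.comp x h1).const_mul ((1/2) * Real.exp (t/2))
  refine h3.congr_deriv ?_
  ring

/-- derivative of the parametrized integral with fixed endpoints -/
lemma hT (a b u : ℝ) :
    HasDerivAt (fun x => ∫ r in a..b, (1/2) * Real.exp (r/2) * f (x^2 - r^2))
      (∫ r in a..b, u * Real.exp (r/2) * deriv f (u^2 - r^2)) u := by
  have hK : IsCompact ((Metric.closedBall u 1) ×ˢ (Set.uIcc a b)) :=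
    (isCompact_closedBall u 1).prod isCompact_uIcc
  obtain ⟨C, hC⟩ := hK.exists_bound_of_continuousOn cont_phi.continuousOn
  have := intervalIntegral.hasDerivAt_integral_of_dominated_loc_of_deriv_le
    (F := fun x r => (1/2) * Real.exp (r/2) * f (x^2 - r^2))
    (F' := fun x r => x * Real.exp (r/2) * deriv f (x^2 - r^2))
    (a := a) (b := b) (μ := volume) (bound := fun _ => C) (s := Metric.ball u 1) (Metric.ball_mem_nhds u one_pos)
    (Eventually.of_forall fun x => ((cont_gx x).aestronglyMeasurable))
    ((cont_gx u).intervalIntegrable a b)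
    ((cont_phi.comp (continuous_const.prodMk continuous_id)).aestronglyMeasurable)
    (ae_of_all _ fun t ht x hx => hC (x, t)
      ⟨Metric.ball_subset_closedBall hx, Set.uIoc_subset_uIcc ht⟩)
    (intervalIntegrable_const)
    (ae_of_all _ fun t _ x _ => hasDerivAt_inner t x)
  exact this.2

/-- derivative of the variable-endpoint part -/
lemma hS (u : ℝ) :
    HasDerivAt (fun x => ∫ r in u..x, (1/2) * Real.exp (r/2) * f (x^2 - r^2))
      ((1/2) * Real.exp (u/2)) u := by
  set c : ℝ := (1/2) * Real.exp (u/2) with hc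
  rw [hasDerivAt_iff_isLittleO, Asymptotics.isLittleO_iff]
  intro ε hε
  have hcont : ContinuousAt (fun p : ℝ × ℝ => (1/2) * Real.exp (p.1/2) * f (p.2^2 - p.1^2))
      (u, u) := cont_psi.continuousAt
  have hval : (1/2 : ℝ) * Real.exp (u/2) * f (u^2 - u^2) = c := by
    rw [sub_self, f_zero, mul_one]
  obtain ⟨δ, hδpos, hδ⟩ := Metric.continuousAt_iff.mp hcont ε hε
  filter_upwards [Metric.ball_mem_nhds u hδpos] with x hx
  have hxu : |x - u| < δ := by simpa [Real.dist_eq] using hx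
  have hint : IntervalIntegrable (fun r => (1/2) * Real.exp (r/2) * f (x^2 - r^2)) volume u x :=
    (cont_gx x).intervalIntegrable u x
  have hint2 : IntervalIntegrable (fun _ : ℝ => c) volume u x := intervalIntegrable_const
  have key : (∫ r in u..x, (1/2) * Real.exp (r/2) * f (x^2 - r^2)) - (x - u) • c
      = ∫ r in u..x, ((1/2) * Real.exp (r/2) * f (x^2 - r^2) - c) := by
    rw [intervalIntegral.integral_sub hint hint2, intervalIntegral.integral_const]
  have hbd : ∀ r ∈ Set.uIoc u x, ‖(1/2) * Real.exp (r/2) * f (x^2 - r^2) - c‖ ≤ ε := by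
    intro r hr
    have hru : |r - u| ≤ |x - u| := by
      have h3 := le_abs_self (x - u)
      have h4 := neg_abs_le (x - u)
      rcases Set.mem_uIoc.mp hr with ⟨h1, h2⟩ | ⟨h1, h2⟩ <;> rw [abs_sub_le_iff] <;>
        constructor <;> linarith
    have hdist : dist ((r, x) : ℝ × ℝ) (u, u) < δ := by
      rw [Prod.dist_eq]
      simp only [Real.dist_eq]
      exact max_lt (lt_of_le_of_lt hru hxu) hxu
    have := hδ hdist
    simp only [Real.dist_eq] at this
    rw [hval] at this
    rw [Real.norm_eq_abs]
    exact this.le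
  calc ‖(∫ r in u..x, (1/2) * Real.exp (r/2) * f (x^2 - r^2))
        - (∫ r in u..u, (1/2) * Real.exp (r/2) * f (u^2 - r^2)) - (x - u) • c‖
      = ‖∫ r in u..x, ((1/2) * Real.exp (r/2) * f (x^2 - r^2) - c)‖ := by
        rw [intervalIntegral.integral_same, sub_zero, key]
    _ ≤ ε * |x - u| := intervalIntegral.norm_integral_le_of_norm_le_const hbd
    _ = ε * ‖x - u‖ := by rw [Real.norm_eq_abs]

lemma chi_zero {r x : ℝ} (h : |r| ≤ |x|) : chiSharp r x = 0 := by
  rw [chiSharp, if_neg (not_lt.mpr h)]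

lemma chi_pos {r x : ℝ} (h0 : 0 < r) (h : |x| < r) :
    chiSharp r x = (1/2) * Real.exp (r/2) * f (x^2 - r^2) := by
  rw [chiSharp, if_pos (by rwa [abs_of_pos h0]), Real.sign_of_pos h0]
  ring

lemma H_zero {R x : ℝ} (hR : 0 < R) (h : R < |x|) : (∫ r in (0:ℝ)..R, chiSharp r x) = 0 := by
  have he : Set.EqOn (fun r => chiSharp r x) (fun _ => (0:ℝ)) (Set.uIcc 0 R) := by
    intro r hr
    rw [Set.uIcc_of_le hR.le] at hr
    exact chi_zero (le_of_lt (lt_of_le_of_lt (by rw [abs_of_nonneg hr.1]; exact hr.2) h))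
  rw [intervalIntegral.integral_congr he]
  simp

lemma H_formula {R x : ℝ} (h0 : 0 < x) (hxR : x < R) :
    (∫ r in (0:ℝ)..R, chiSharp r x)
      = (∫ r in x..R, (1/2) * Real.exp (r/2) * f (x^2 - r^2)) := by
  have he : Set.EqOn (fun r => chiSharp r x) (fun _ => (0:ℝ)) (Set.uIcc 0 x) := by
    intro r hr
    rw [Set.uIcc_of_le h0.le] at hr
    exact chi_zero (by rw [abs_of_nonneg hr.1, abs_of_pos h0]; exact hr.2)
  have h1 : (∫ r in (0:ℝ)..x, chiSharp r x) = 0 := by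
    rw [intervalIntegral.integral_congr he]; simp
  have heq2 : ∀ r ∈ Set.uIoc x R, chiSharp r x = (1/2) * Real.exp (r/2) * f (x^2 - r^2) := by
    intro r hr
    rw [Set.uIoc_of_le hxR.le] at hr
    exact chi_pos (h0.trans hr.1) (by rw [abs_of_pos h0]; exact hr.1)
  have h2 : (∫ r in x..R, chiSharp r x) = ∫ r in x..R, (1/2) * Real.exp (r/2) * f (x^2 - r^2) :=
    intervalIntegral.integral_congr_ae (ae_of_all _ heq2)
  have hi1 : IntervalIntegrable (fun r => chiSharp r x) volume 0 x :=
    (continuousOn_const.congr he).intervalIntegrable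
  have hi2 : IntervalIntegrable (fun r => chiSharp r x) volume x R := by
    refine ((cont_gx x).intervalIntegrable x R).congr ?_
    exact fun r hr => (heq2 r hr).symm
  rw [← intervalIntegral.integral_add_adjacent_intervals hi1 hi2, h1, zero_add, h2]

/-- key positive case -/
lemma key (R u : ℝ) (h0 : 0 < u) (hLT : u < R) :
    HasDerivAt (fun u' => ∫ r in (0:ℝ)..R, chiSharp r u')
      ((∫ r in u..R, u * Real.exp (r/2) * deriv f (u^2 - r^2)) - (1/2) * Real.exp (u/2)) u := by
  have hTS := (hT u R u).sub (hS u)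
  apply hTS.congr_of_eventuallyEq
  have hnb : Set.Ioo (0:ℝ) R ∈ 𝓝 u := Ioo_mem_nhds h0 hLT
  filter_upwards [hnb] with x hx
  have hx0 : 0 < x := hx.1
  have hxR : x < R := hx.2
  rw [H_formula hx0 hxR]
  have hi1 : IntervalIntegrable (fun r => (1/2) * Real.exp (r/2) * f (x^2 - r^2)) volume u x :=
    (cont_gx x).intervalIntegrable u x
  have hi2 : IntervalIntegrable (fun r => (1/2) * Real.exp (r/2) * f (x^2 - r^2)) volume x R :=
    (cont_gx x).intervalIntegrable x R
  rw [Pi.sub_apply, ← intervalIntegral.integral_add_adjacent_intervals hi1 hi2]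
  ring

theorem stmt11 (R : ℝ) (hR : 0 < R) (u : ℝ) (hu : u ≠ 0) (hu' : |u| ≠ R) :
    HasDerivAt (fun u' => ∫ r in (0 : ℝ)..R, chiSharp r u')
      ((∫ r in |u|..(max R |u|), u * Real.exp (r / 2) * deriv f (u ^ 2 - r ^ 2))
        - (1 / 2) * Real.sign u * Real.exp (|u| / 2) * (if |u| < R then 1 else 0)) u ∧
    (1 / 2) * Real.sign u
        + ((∫ r in |u|..(max R |u|), u * Real.exp (r / 2) * deriv f (u ^ 2 - r ^ 2))
          - (1 / 2) * Real.sign u * Real.exp (|u| / 2) * (if |u| < R then 1 else 0))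
      = (1 / 2) * Real.sign u * (1 - Real.exp (|u| / 2) * (if |u| < R then 1 else 0))
        + ∫ r in |u|..(max R |u|), u * Real.exp (r / 2) * deriv f (u ^ 2 - r ^ 2) := by
  refine ⟨?_, by ring⟩
  rcases lt_or_gt_of_ne hu' with hlt | hgt
  · rcases hu.lt_or_gt with hneg | hpos
    · -- u < 0
      have hv0 : 0 < -u := neg_pos.mpr hneg
      have hvR : -u < R := by rwa [abs_of_neg hneg] at hlt
      have hv := key R (-u) hv0 hvR
      have hcomp := hv.comp u (hasDerivAt_neg u)
      have heven : ((fun u' => ∫ r in (0:ℝ)..R, chiSharp r u') ∘ fun x => -x)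
          = fun u' => ∫ r in (0:ℝ)..R, chiSharp r u' := by
        funext x
        show (∫ r in (0:ℝ)..R, chiSharp r (-x)) = ∫ r in (0:ℝ)..R, chiSharp r x
        have h : ∀ r, chiSharp r (-x) = chiSharp r x := by
          intro r
          have hsq : (-x)^2 = x^2 := by ring
          rw [chiSharp, chiSharp, abs_neg, hsq]
        simp only [h]
      rw [heven] at hcomp
      refine hcomp.congr_deriv ?_
      rw [abs_of_neg hneg, Real.sign_of_neg hneg, max_eq_left hvR.le, if_pos hvR]
      have hneg_int : (∫ r in (-u)..R, (-u) * Real.exp (r/2) * deriv f ((-u)^2 - r^2))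
          = -∫ r in (-u)..R, u * Real.exp (r / 2) * deriv f (u ^ 2 - r ^ 2) := by
        rw [← intervalIntegral.integral_neg]
        congr 1
        funext r
        have hsq : (-u)^2 = u^2 := by ring
        rw [hsq]; ring
      rw [hneg_int]
      ring
    · -- 0 < u
      have huR : u < R := by rwa [abs_of_pos hpos] at hlt
      have := key R u hpos huR
      refine this.congr_deriv ?_
      rw [abs_of_pos hpos, Real.sign_of_pos hpos, max_eq_left huR.le, if_pos huR]
      ring
  · -- R < |u|
    have hopen : IsOpen {x : ℝ | R < |x|} := isOpen_lt continuous_const continuous_abs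
    have hev : (fun u' => ∫ r in (0:ℝ)..R, chiSharp r u') =ᶠ[𝓝 u] fun _ => (0:ℝ) := by
      filter_upwards [hopen.mem_nhds hgt] with x hx
      exact H_zero hR hx
    have hd := (hasDerivAt_const u (0:ℝ)).congr_of_eventuallyEq hev
    refine hd.congr_deriv ?_
    rw [max_eq_right hgt.le, intervalIntegral.integral_same, if_neg (not_lt.mpr hgt.le)]
    ring
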